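/- arXiv:1305.1076 — 2 statements merged into one kernel-verified Lean document; each statement's English description precedes it below -/
import Mathlib

section
/- For 0 ≤ m ≤ n and any n ≥ 1, β(r, m, n) := α(r, m, n) − α(r, m−2, n) is a nonnegative integer for all r ∈ ℤ. -/
/-- The set of the `2n` odd integers `{1-2n, 3-2n, ..., 2n-1}`. -/
def oddSet (n : ℕ) : Finset ℤ :=
  (Finset.range (2 * n)).image (fun i : ℕ => 2 * (i : ℤ) + 1 - 2 * n)

/-- `alphaCount r m n` is the number of `m`-element subsets of
`{1-2n, 3-2n, ..., 2n-1}` whose elements sum to `r`. -/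
def alphaCount (r : ℤ) (m n : ℕ) : ℕ :=
  (((oddSet n).powersetCard m).filter (fun t => t.sum id = r)).card

/-- `betaInt r m n = α(r,m,n) - α(r,m-2,n)`, with `α(r,j,n) = 0` for `j < 0`. -/
def betaInt (r : ℤ) (m n : ℕ) : ℤ :=
  if 2 ≤ m then (alphaCount r m n : ℤ) - (alphaCount r (m - 2) n : ℤ)
  else (alphaCount r m n : ℤ)

namespace BetaAux

def negate (P : Finset ℤ) : Finset ℤ := P.image (fun x => -x)

lemma mem_negate {P : Finset ℤ} {x : ℤ} : x ∈ negate P ↔ -x ∈ P := by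
  constructor
  · intro h
    obtain ⟨a, ha, rfl⟩ := Finset.mem_image.mp h
    simpa using ha
  · intro h
    exact Finset.mem_image.mpr ⟨-x, h, by ring⟩

lemma negate_card (P : Finset ℤ) : (negate P).card = P.card :=
  Finset.card_image_of_injective _ neg_injective

lemma negate_sum (P : Finset ℤ) : (negate P).sum id = -(P.sum id) := by
  rw [negate, Finset.sum_image (fun a _ b _ h => neg_injective h)]
  exact Finset.sum_neg_distrib (f := (id : ℤ → ℤ))

lemma mem_oddSet {n : ℕ} {x : ℤ} :
    x ∈ oddSet n ↔ ∃ i : ℕ, i < 2 * n ∧ x = 2 * (i : ℤ) + 1 - 2 * n := by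
  simp [oddSet, eq_comm]

lemma neg_mem_oddSet {n : ℕ} {x : ℤ} (h : x ∈ oddSet n) : -x ∈ oddSet n := by
  rw [mem_oddSet] at h ⊢
  obtain ⟨i, hi, rfl⟩ := h
  exact ⟨2 * n - 1 - i, by omega, by push_cast [Nat.cast_sub (by omega : i ≤ 2*n-1)]; ring_nf; omega⟩

lemma zero_not_mem_oddSet {n : ℕ} : (0 : ℤ) ∉ oddSet n := by
  rw [mem_oddSet]
  rintro ⟨i, hi, h⟩
  omega

lemma ne_zero_of_mem_oddSet {n : ℕ} {x : ℤ} (h : x ∈ oddSet n) : x ≠ 0 := by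
  rintro rfl; exact zero_not_mem_oddSet h

def posOdd (n : ℕ) : Finset ℤ := (oddSet n).filter (fun x => 0 < x)

lemma card_posOdd (n : ℕ) : (posOdd n).card = n := by
  have h : posOdd n = (Finset.Ico n (2 * n)).image (fun i : ℕ => 2 * (i : ℤ) + 1 - 2 * n) := by
    ext x
    simp only [posOdd, Finset.mem_filter, mem_oddSet, Finset.mem_image, Finset.mem_Ico]
    constructor
    · rintro ⟨⟨i, hi, rfl⟩, hx⟩
      exact ⟨i, ⟨by omega, hi⟩, rfl⟩
    · rintro ⟨i, ⟨h1, h2⟩, rfl⟩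
      exact ⟨⟨i, h2, rfl⟩, by omega⟩
  rw [h, Finset.card_image_of_injective _ (fun a b hab => by omega), Nat.card_Ico]
  omega

def sing (s : Finset ℤ) : Finset ℤ := s.filter (fun x => -x ∉ s)

def prs (s : Finset ℤ) : Finset ℤ := s.filter (fun x => 0 < x ∧ -x ∈ s)

lemma mem_sing {s : Finset ℤ} {x : ℤ} : x ∈ sing s ↔ x ∈ s ∧ -x ∉ s := by
  simp [sing]

lemma mem_prs {s : Finset ℤ} {x : ℤ} : x ∈ prs s ↔ x ∈ s ∧ 0 < x ∧ -x ∈ s := by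
  simp [prs]

lemma decomp {s : Finset ℤ} (hs : (0 : ℤ) ∉ s) :
    s = sing s ∪ (prs s ∪ negate (prs s)) := by
  ext x
  simp only [Finset.mem_union, mem_sing, mem_prs, mem_negate, neg_neg]
  constructor
  · intro hx
    by_cases hnx : -x ∈ s
    · rcases lt_trichotomy x 0 with h | h | h
      · exact Or.inr (Or.inr ⟨hnx, by omega, hx⟩)
      · exact absurd (h ▸ hx) hs
      · exact Or.inr (Or.inl ⟨hx, h, hnx⟩)
    · exact Or.inl ⟨hx, hnx⟩
  · rintro (⟨h, _⟩ | ⟨h, _⟩ | ⟨_, _, h⟩) <;> exact h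

lemma disj1 {s : Finset ℤ} : Disjoint (sing s) (prs s ∪ negate (prs s)) := by
  rw [Finset.disjoint_left]
  intro x hx hx'
  rw [mem_sing] at hx
  rcases Finset.mem_union.mp hx' with h | h
  · exact hx.2 (mem_prs.mp h).2.2
  · rw [mem_negate, mem_prs] at h
    exact hx.2 h.1

lemma disj2 {s : Finset ℤ} : Disjoint (prs s) (negate (prs s)) := by
  rw [Finset.disjoint_left]
  intro x hx hx'
  rw [mem_prs] at hx
  rw [mem_negate, mem_prs] at hx'
  omega

lemma card_decomp {s : Finset ℤ} (hs : (0 : ℤ) ∉ s) :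
    s.card = (sing s).card + 2 * (prs s).card := by
  conv_lhs => rw [decomp hs]
  rw [Finset.card_union_of_disjoint disj1, Finset.card_union_of_disjoint disj2,
    negate_card]
  ring

lemma sum_decomp {s : Finset ℤ} (hs : (0 : ℤ) ∉ s) :
    s.sum id = (sing s).sum id := by
  conv_lhs => rw [decomp hs]
  rw [Finset.sum_union disj1, Finset.sum_union disj2, negate_sum]
  ring

def avail (n : ℕ) (T : Finset ℤ) : Finset ℤ :=
  (posOdd n).filter (fun v => v ∉ T ∧ -v ∉ T)

lemma mem_avail {n : ℕ} {T : Finset ℤ} {x : ℤ} :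
    x ∈ avail n T ↔ (x ∈ oddSet n ∧ 0 < x) ∧ (x ∉ T ∧ -x ∉ T) := by
  simp [avail, posOdd, Finset.mem_filter, and_assoc]

lemma card_avail {n : ℕ} {T : Finset ℤ} (hT : T ⊆ oddSet n)
    (hnp : ∀ x ∈ T, -x ∉ T) : (avail n T).card = n - T.card := by
  have habs : avail n T = posOdd n \ T.image (fun x => |x|) := by
    ext x
    simp only [mem_avail, Finset.mem_sdiff, Finset.mem_image, posOdd, Finset.mem_filter]
    constructor
    · rintro ⟨⟨h1, h2⟩, h3, h4⟩
      refine ⟨⟨h1, h2⟩, ?_⟩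
      rintro ⟨y, hy, hyx⟩
      rcases abs_eq_abs.mp (hyx.trans (abs_of_pos h2).symm) with rfl | rfl
      · exact h3 hy
      · exact h4 (by simpa using hy)
    · rintro ⟨⟨h1, h2⟩, h3⟩
      refine ⟨⟨h1, h2⟩, fun hx => h3 ⟨x, hx, abs_of_pos h2⟩, fun hx => h3 ⟨-x, hx, ?_⟩⟩
      rw [abs_neg, abs_of_pos h2]
  have hsub : T.image (fun x => |x|) ⊆ posOdd n := by
    intro y hy
    obtain ⟨x, hx, rfl⟩ := Finset.mem_image.mp hy
    have hx0 : x ≠ 0 := ne_zero_of_mem_oddSet (hT hx)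
    rcases abs_choice x with h | h
    · rw [h]
      exact Finset.mem_filter.mpr ⟨hT hx, by have h2 := abs_nonneg x; omega⟩
    · rw [h]
      refine Finset.mem_filter.mpr ⟨neg_mem_oddSet (hT hx), ?_⟩
      have := abs_nonneg x
      omega
  have hinj : (T : Set ℤ).InjOn (fun x => |x|) := by
    intro a ha b hb hab
    rcases abs_eq_abs.mp hab with h | h
    · exact h
    · exact absurd (h ▸ ha) (hnp b hb)
  rw [habs, Finset.card_sdiff_of_subset hsub, Finset.card_image_of_injOn hinj, card_posOdd]

lemma glue_disj1 {n : ℕ} {T P : Finset ℤ} (hP : P ⊆ avail n T) :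
    Disjoint T (P ∪ negate P) := by
  rw [Finset.disjoint_left]
  intro x hx hx'
  rcases Finset.mem_union.mp hx' with h | h
  · exact (mem_avail.mp (hP h)).2.1 hx
  · refine (mem_avail.mp (hP (mem_negate.mp h))).2.2 ?_
    rw [neg_neg]
    exact hx

lemma glue_disj2 {n : ℕ} {T P : Finset ℤ} (hP : P ⊆ avail n T) :
    Disjoint P (negate P) := by
  rw [Finset.disjoint_left]
  intro x hx hx'
  have h1 := (mem_avail.mp (hP hx)).1.2
  have h2 := (mem_avail.mp (hP (mem_negate.mp hx'))).1.2
  omega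

lemma glue_mem {T P : Finset ℤ} {x : ℤ} :
    x ∈ T ∪ (P ∪ negate P) ↔ x ∈ T ∨ x ∈ P ∨ -x ∈ P := by
  simp [Finset.mem_union, mem_negate]

lemma sing_glue {n : ℕ} {T P : Finset ℤ} (hnp : ∀ x ∈ T, -x ∉ T)
    (hP : P ⊆ avail n T) : sing (T ∪ (P ∪ negate P)) = T := by
  ext x
  rw [mem_sing, glue_mem, glue_mem]
  constructor
  · rintro ⟨hx | hx | hx, hnx⟩
    · exact hx
    · exact absurd (Or.inr (Or.inr (by rwa [neg_neg]))) hnx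
    · exact absurd (Or.inr (Or.inl hx)) hnx
  · intro hx
    refine ⟨Or.inl hx, ?_⟩
    rintro (h | h | h)
    · exact hnp x hx h
    · exact (mem_avail.mp (hP h)).2.2 (by rwa [neg_neg])
    · rw [neg_neg] at h
      exact (mem_avail.mp (hP h)).2.1 hx

lemma prs_glue {n : ℕ} {T P : Finset ℤ} (hnp : ∀ x ∈ T, -x ∉ T)
    (hP : P ⊆ avail n T) : prs (T ∪ (P ∪ negate P)) = P := by
  ext x
  rw [mem_prs, glue_mem, glue_mem]
  constructor
  · rintro ⟨hx | hx | hx, hpos, hnx⟩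
    · rcases hnx with h | h | h
      · exact absurd h (hnp x hx)
      · have h2 := (mem_avail.mp (hP h)).2.2
        rw [neg_neg] at h2
        exact absurd hx h2
      · rw [neg_neg] at h
        exact absurd hx (mem_avail.mp (hP h)).2.1
    · exact hx
    · have := (mem_avail.mp (hP hx)).1.2
      omega
  · intro hx
    exact ⟨Or.inr (Or.inl hx), (mem_avail.mp (hP hx)).1.2,
      Or.inr (Or.inr (by rwa [neg_neg]))⟩

lemma card_glue {n : ℕ} {T P : Finset ℤ} (hP : P ⊆ avail n T) :
    (T ∪ (P ∪ negate P)).card = T.card + 2 * P.card := by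
  rw [Finset.card_union_of_disjoint (glue_disj1 hP),
    Finset.card_union_of_disjoint (glue_disj2 hP), negate_card]
  ring

lemma sum_glue {n : ℕ} {T P : Finset ℤ} (hP : P ⊆ avail n T) :
    (T ∪ (P ∪ negate P)).sum id = T.sum id := by
  rw [Finset.sum_union (glue_disj1 hP), Finset.sum_union (glue_disj2 hP), negate_sum]
  ring

lemma glue_subset {n : ℕ} {T P : Finset ℤ} (hT : T ⊆ oddSet n) (hP : P ⊆ avail n T) :
    T ∪ (P ∪ negate P) ⊆ oddSet n := by
  intro x hx
  rcases glue_mem.mp hx with h | h | h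
  · exact hT h
  · exact (mem_avail.mp (hP h)).1.1
  · have := (mem_avail.mp (hP h)).1.1
    simpa using neg_mem_oddSet this

lemma fiber_card {n m' : ℕ} {r : ℤ} {T : Finset ℤ} (hT : T ⊆ oddSet n)
    (hnp : ∀ x ∈ T, -x ∉ T) (hr : T.sum id = r) {k : ℕ} (hk : m' = T.card + 2 * k) :
    ((((oddSet n).powersetCard m').filter (fun t => t.sum id = r)).filter
      (fun s => sing s = T)).card = (n - T.card).choose k := by
  rw [← card_avail hT hnp, ← Finset.card_powersetCard]
  apply Finset.card_nbij' (fun s => prs s) (fun P => T ∪ (P ∪ negate P))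
  · intro s hs
    simp only [Finset.mem_coe, Finset.mem_filter, Finset.mem_powersetCard] at hs
    obtain ⟨⟨⟨hsub, hcard⟩, _⟩, hsing⟩ := hs
    have h0 : (0 : ℤ) ∉ s := fun h => zero_not_mem_oddSet (hsub h)
    rw [Finset.mem_coe, Finset.mem_powersetCard]
    constructor
    · intro x hx
      rw [mem_prs] at hx
      rw [mem_avail]
      refine ⟨⟨hsub hx.1, hx.2.1⟩, ?_, ?_⟩
      · intro hxT
        rw [← hsing, mem_sing] at hxT
        exact hxT.2 hx.2.2
      · intro hxT
        rw [← hsing, mem_sing] at hxT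
        exact hxT.2 (by rw [neg_neg]; exact hx.1)
    · have := card_decomp h0
      rw [hsing] at this
      beta_reduce
      omega
  · intro P hP
    rw [Finset.mem_coe, Finset.mem_powersetCard] at hP
    obtain ⟨hPsub, hPcard⟩ := hP
    simp only [Finset.mem_coe, Finset.mem_filter, Finset.mem_powersetCard]
    exact ⟨⟨⟨glue_subset hT hPsub, by rw [card_glue hPsub]; omega⟩,
      by rw [sum_glue hPsub]; exact hr⟩, sing_glue hnp hPsub⟩
  · intro s hs
    simp only [Finset.mem_coe, Finset.mem_filter, Finset.mem_powersetCard] at hs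
    obtain ⟨⟨⟨hsub, hcard⟩, _⟩, hsing⟩ := hs
    have h0 : (0 : ℤ) ∉ s := fun h => zero_not_mem_oddSet (hsub h)
    conv_rhs => rw [decomp h0]
    rw [hsing]
  · intro P hP
    rw [Finset.mem_coe, Finset.mem_powersetCard] at hP
    exact prs_glue hnp hP.1

lemma alpha_eq_sum (n m' : ℕ) (r : ℤ) :
    (((oddSet n).powersetCard m').filter (fun t => t.sum id = r)).card =
      ∑ T ∈ ((oddSet n).powerset.filter (fun T => (∀ x ∈ T, -x ∉ T) ∧ T.sum id = r)),
        ((((oddSet n).powersetCard m').filter (fun t => t.sum id = r)).filter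
          (fun s => sing s = T)).card := by
  apply Finset.card_eq_sum_card_fiberwise
  intro s hs
  simp only [Finset.mem_coe, Finset.mem_filter, Finset.mem_powersetCard] at hs
  obtain ⟨⟨hsub, hcard⟩, hsum⟩ := hs
  have h0 : (0 : ℤ) ∉ s := fun h => zero_not_mem_oddSet (hsub h)
  refine Finset.mem_filter.mpr ⟨Finset.mem_powerset.mpr
    (fun x hx => hsub (mem_sing.mp hx).1), ?_, ?_⟩
  · intro x hx hx2
    exact (mem_sing.mp hx).2 (mem_sing.mp hx2).1
  · rw [← sum_decomp h0, hsum]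

end BetaAux

open BetaAux in
theorem beta_nonneg (n : ℕ) (hn : 1 ≤ n) (m : ℕ) (hm : m ≤ n) (r : ℤ) :
    0 ≤ betaInt r m n := by
  rw [betaInt]
  split_ifs with h2
  · rw [sub_nonneg, Nat.cast_le]
    unfold alphaCount
    rw [alpha_eq_sum n m r, alpha_eq_sum n (m - 2) r]
    apply Finset.sum_le_sum
    intro T hT
    simp only [Finset.mem_filter, Finset.mem_powerset] at hT
    obtain ⟨hTsub, hnp, hr⟩ := hT
    by_cases hne : ((((oddSet n).powersetCard (m - 2)).filter (fun t => t.sum id = r)).filter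
          (fun s => sing s = T)).Nonempty
    · obtain ⟨s, hs⟩ := hne
      simp only [Finset.mem_filter, Finset.mem_powersetCard] at hs
      obtain ⟨⟨⟨hsub, hcard⟩, _⟩, hsing⟩ := hs
      have h0 : (0 : ℤ) ∉ s := fun h => zero_not_mem_oddSet (hsub h)
      have hdec := card_decomp h0
      rw [hsing, hcard] at hdec
      have hk2 : m = T.card + 2 * ((prs s).card + 1) := by omega
      rw [fiber_card hTsub hnp hr hdec, fiber_card hTsub hnp hr hk2]
      apply Nat.choose_le_succ_of_lt_half_left
      have hhalf : (prs s).card + 1 ≤ (n - T.card) / 2 := by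
        rw [Nat.le_div_iff_mul_le (by norm_num : 0 < 2)]
        omega
      omega
    · rw [Finset.not_nonempty_iff_eq_empty] at hne
      rw [hne]
      simp
  · exact Int.ofNat_nonneg _
end

section
/- Let α, β be nonzero complex numbers, p a prime, k an integer. With μ₀ = α^{−1} β^{−1} p^{(k−1/2)+(k+1)/2}, μ₁ = α p^{−1/2}, μ₂ = α p^{1/2}, μ₃ = β², the degree-8 spinor Euler polynomial (1 − μ₀ X) ∏_{j=1}^{3} ∏_{i₁<⋯<i_j} (1 − μ₀ μ_{i₁}⋯μ_{i_j} X) equals the product of ∏_{±}(1 − α^{±1} β p^{k−1/2+(k+1)/2} X)(1 − α^{±1} β^{−1} p^{k−1/2+(k+1)/2} X) [the local factor of L(s, g ⊗ f) at s shifted], times ∏_{±}(1 − β^{±1} p^{(k+1)/2} p^{k} X) and ∏_{±}(1 − β^{±1} p^{(k+1)/2} p^{k−1} X). Equivalently, the spinor Euler factor of ℱ_{f,g} ∈ S_{k+2}(Γ₃) at p factors as the local factors of L(s−k, g)·L(s−k+1, g)·L(s, g⊗f). -/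
open Complex

set_option maxHeartbeats 2000000 in
theorem miyawaki_lift_degree_three_spinor (p : ℕ) (hp : p.Prime) (k : ℤ)
    (a b : ℂ) (ha : a ≠ 0) (hb : b ≠ 0)
    (mu0 mu1 mu2 mu3 : ℂ)
    (hmu0 : mu0 = a⁻¹ * b⁻¹ * (p : ℂ) ^ (((k : ℂ) - 1 / 2) + ((k : ℂ) + 1) / 2))
    (hmu1 : mu1 = a * (p : ℂ) ^ (-(1 / 2) : ℂ))
    (hmu2 : mu2 = a * (p : ℂ) ^ ((1 / 2) : ℂ))
    (hmu3 : mu3 = b ^ 2) :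
    ∀ X : ℂ,
      (1 - mu0 * X) *
      ((1 - mu0 * mu1 * X) * (1 - mu0 * mu2 * X) * (1 - mu0 * mu3 * X)) *
      ((1 - mu0 * mu1 * mu2 * X) * (1 - mu0 * mu1 * mu3 * X) *
        (1 - mu0 * mu2 * mu3 * X)) *
      (1 - mu0 * mu1 * mu2 * mu3 * X) =
      ((1 - a * b * (p : ℂ) ^ (((k : ℂ) - 1 / 2) + ((k : ℂ) + 1) / 2) * X) *
       (1 - a⁻¹ * b * (p : ℂ) ^ (((k : ℂ) - 1 / 2) + ((k : ℂ) + 1) / 2) * X) *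
       (1 - a * b⁻¹ * (p : ℂ) ^ (((k : ℂ) - 1 / 2) + ((k : ℂ) + 1) / 2) * X) *
       (1 - a⁻¹ * b⁻¹ * (p : ℂ) ^ (((k : ℂ) - 1 / 2) + ((k : ℂ) + 1) / 2) * X)) *
      ((1 - b * (p : ℂ) ^ (((k : ℂ) + 1) / 2) * (p : ℂ) ^ (k : ℂ) * X) *
       (1 - b⁻¹ * (p : ℂ) ^ (((k : ℂ) + 1) / 2) * (p : ℂ) ^ (k : ℂ) * X)) *
      ((1 - b * (p : ℂ) ^ (((k : ℂ) + 1) / 2) * (p : ℂ) ^ ((k : ℂ) - 1) * X) *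
       (1 - b⁻¹ * (p : ℂ) ^ (((k : ℂ) + 1) / 2) * (p : ℂ) ^ ((k : ℂ) - 1) * X)) := by
  intro X
  have hc : (p : ℂ) ≠ 0 := Nat.cast_ne_zero.mpr hp.pos.ne'
  have E1 : (p : ℂ) ^ (((k : ℂ) + 1) / 2) * (p : ℂ) ^ ((k : ℂ)) =
      (p : ℂ) ^ (((k : ℂ) - 1 / 2) + ((k : ℂ) + 1) / 2) * (p : ℂ) ^ ((1 / 2) : ℂ) := by
    rw [← cpow_add _ _ hc, ← cpow_add _ _ hc]
    ring_nf
  have E2 : (p : ℂ) ^ (((k : ℂ) + 1) / 2) * (p : ℂ) ^ ((k : ℂ) - 1) =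
      (p : ℂ) ^ (((k : ℂ) - 1 / 2) + ((k : ℂ) + 1) / 2) * (p : ℂ) ^ (-(1 / 2) : ℂ) := by
    rw [← cpow_add _ _ hc, ← cpow_add _ _ hc]
    ring_nf
  have E3 : (p : ℂ) ^ ((1 / 2) : ℂ) * (p : ℂ) ^ (-(1 / 2) : ℂ) = 1 := by
    rw [← cpow_add _ _ hc]
    norm_num
  subst hmu0 hmu1 hmu2 hmu3
  have F1 : ∀ c : ℂ, 1 - c * (p : ℂ) ^ (((k : ℂ) + 1) / 2) * (p : ℂ) ^ ((k : ℂ)) * X =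
      1 - c * ((p : ℂ) ^ (((k : ℂ) - 1 / 2) + ((k : ℂ) + 1) / 2) * (p : ℂ) ^ ((1 / 2) : ℂ)) * X := by
    intro c; rw [mul_assoc c, E1]
  have F2 : ∀ c : ℂ, 1 - c * (p : ℂ) ^ (((k : ℂ) + 1) / 2) * (p : ℂ) ^ ((k : ℂ) - 1) * X =
      1 - c * ((p : ℂ) ^ (((k : ℂ) - 1 / 2) + ((k : ℂ) + 1) / 2) * (p : ℂ) ^ (-(1 / 2) : ℂ)) * X := by
    intro c; rw [mul_assoc c, E2]
  rw [F1 b, F1 b⁻¹, F2 b, F2 b⁻¹]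
  generalize hP : (p : ℂ) ^ (((k : ℂ) - 1 / 2) + ((k : ℂ) + 1) / 2) = P at *
  generalize hH : (p : ℂ) ^ ((1 / 2) : ℂ) = H at *
  generalize hI : (p : ℂ) ^ (-(1 / 2) : ℂ) = I at *
  have ha1 : a⁻¹ * a = 1 := inv_mul_cancel₀ ha
  have hb1 : b⁻¹ * b = 1 := inv_mul_cancel₀ hb
  have c1 : a⁻¹ * b⁻¹ * P * (a * I) = b⁻¹ * (P * I) := by
    linear_combination b⁻¹ * P * I * ha1
  have c2 : a⁻¹ * b⁻¹ * P * (a * H) = b⁻¹ * (P * H) := by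
    linear_combination b⁻¹ * P * H * ha1
  have c3 : a⁻¹ * b⁻¹ * P * b ^ 2 = a⁻¹ * b * P := by
    linear_combination a⁻¹ * b * P * hb1
  have c4 : a⁻¹ * b⁻¹ * P * (a * I) * (a * H) = a * b⁻¹ * P := by
    linear_combination a * b⁻¹ * P * H * I * ha1 + a * b⁻¹ * P * E3
  have c5 : a⁻¹ * b⁻¹ * P * (a * I) * b ^ 2 = b * (P * I) := by
    linear_combination b * P * I * b⁻¹ * b * ha1 + P * I * b * hb1
  have c6 : a⁻¹ * b⁻¹ * P * (a * H) * b ^ 2 = b * (P * H) := by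
    linear_combination b * P * H * b⁻¹ * b * ha1 + P * H * b * hb1
  have c7 : a⁻¹ * b⁻¹ * P * (a * I) * (a * H) * b ^ 2 = a * b * P := by
    linear_combination a * b * P * H * I * b⁻¹ * b * ha1 + a * P * b * H * I * hb1 + a * b * P * E3
  rw [c7, c4, c5, c6, c1, c2, c3]
  ring
end
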